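/- Suppose the joint distribution p of (X_1,...,X_n,Y) is head-to-head, i.e. X_1,...,X_n are mutually independent (marginally). Then RSI(X;Y) = -TC(X|Y) ≤ 0. -/

import Mathlib

open Classical Finset Real

namespace HOI

/-- Distribution (pmf) of a random variable `X` on a finite sample space with mass `p`. -/
noncomputable def pdist {Ω α : Type} [Fintype Ω] (p : Ω → ℝ) (X : Ω → α) (a : α) : ℝ :=
  ∑ ω, if X ω = a then p ω else 0

/-- Shannon entropy of a finitely-supported discrete random variable. -/
noncomputable def ent {Ω α : Type} [Fintype Ω] [Fintype α] (p : Ω → ℝ) (X : Ω → α) : ℝ :=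
  ∑ a, Real.negMulLog (pdist p X a)

/-- Conditional entropy H(X|Y) = H(X,Y) - H(Y). -/
noncomputable def cent {Ω α β : Type} [Fintype Ω] [Fintype α] [Fintype β]
    (p : Ω → ℝ) (X : Ω → α) (Y : Ω → β) : ℝ :=
  ent p (fun ω => (X ω, Y ω)) - ent p Y

/-- Mutual information I(X;Y). -/
noncomputable def mi {Ω α β : Type} [Fintype Ω] [Fintype α] [Fintype β]
    (p : Ω → ℝ) (X : Ω → α) (Y : Ω → β) : ℝ :=
  ent p X + ent p Y - ent p (fun ω => (X ω, Y ω))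

/-- Conditional mutual information I(X;Y|Z). -/
noncomputable def cmi {Ω α β γ : Type} [Fintype Ω] [Fintype α] [Fintype β] [Fintype γ]
    (p : Ω → ℝ) (X : Ω → α) (Y : Ω → β) (Z : Ω → γ) : ℝ :=
  cent p X Z + cent p Y Z - cent p (fun ω => (X ω, Y ω)) Z

/-- Interaction information II(X;Y;Z) = I(X;Y) - I(X;Y|Z). -/
noncomputable def ii {Ω α β γ : Type} [Fintype Ω] [Fintype α] [Fintype β] [Fintype γ]
    (p : Ω → ℝ) (X : Ω → α) (Y : Ω → β) (Z : Ω → γ) : ℝ :=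
  mi p X Y - cmi p X Y Z

/-- Sub-vector of components of `X` with indices in `s`. -/
def subvec {Ω : Type} {n : ℕ} {α : Fin n → Type} (X : ∀ i, Ω → α i) (s : Finset (Fin n)) :
    Ω → ((i : {j // j ∈ s}) → α i.1) :=
  fun ω i => X i.1 ω

/-- The full random vector. -/
def fullvec {Ω : Type} {n : ℕ} {α : Fin n → Type} (X : ∀ i, Ω → α i) : Ω → (∀ i, α i) :=
  fun ω i => X i ω

/-- Joint entropy of the components of `X` with indices in `s`. -/
noncomputable def vecH {Ω : Type} [Fintype Ω] {n : ℕ} {α : Fin n → Type} [∀ i, Fintype (α i)]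
    (p : Ω → ℝ) (X : ∀ i, Ω → α i) (s : Finset (Fin n)) : ℝ :=
  ent p (subvec X s)

/-- Total correlation. -/
noncomputable def TC {Ω : Type} [Fintype Ω] {n : ℕ} {α : Fin n → Type} [∀ i, Fintype (α i)]
    (p : Ω → ℝ) (X : ∀ i, Ω → α i) : ℝ :=
  (∑ j, ent p (X j)) - ent p (fullvec X)

/-- Dual total correlation. -/
noncomputable def DTC {Ω : Type} [Fintype Ω] {n : ℕ} {α : Fin n → Type} [∀ i, Fintype (α i)]
    (p : Ω → ℝ) (X : ∀ i, Ω → α i) : ℝ :=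
  ent p (fullvec X) - ∑ j, (ent p (fullvec X) - vecH p X (Finset.univ \ {j}))

/-- O-information. -/
noncomputable def Oinfo {Ω : Type} [Fintype Ω] {n : ℕ} {α : Fin n → Type} [∀ i, Fintype (α i)]
    (p : Ω → ℝ) (X : ∀ i, Ω → α i) : ℝ :=
  ((n : ℝ) - 2) * ent p (fullvec X) + ∑ j, (ent p (X j) - vecH p X (Finset.univ \ {j}))

/-- Redundancy-synergy index. -/
noncomputable def RSI {Ω β : Type} [Fintype Ω] [Fintype β] {n : ℕ} {α : Fin n → Type}
    [∀ i, Fintype (α i)] (p : Ω → ℝ) (X : ∀ i, Ω → α i) (Y : Ω → β) : ℝ :=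
  (∑ j, mi p (X j) Y) - mi p (fullvec X) Y

end HOI

open HOI

/-!
Under marginal independence `H(X) = ∑ⱼ H(Xⱼ)`, and with this the identity `RSI = -TC(X|Y)` is a
rearrangement of entropies. The sign is subadditivity of conditional entropy,
`H(U,W|Y) ≤ H(U|Y) + H(W|Y)`, iterated over the coordinates. Writing every entropy as an
expectation `H(S) = E[-log p_S(S)]`, that inequality is Gibbs' inequality `E[log r] ≤ E[r] - 1`
for `r = p(u,y) p(w,y) / (p(u,w,y) p(y))`, whose expectation is at most `1`.
-/

theorem sum_mul_log_le_sum_mul_sub {ι : Type} [Fintype ι] {w r : ι → ℝ}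
    (hw : ∀ i, 0 ≤ w i) (hr : ∀ i, 0 < w i → 0 < r i) :
    ∑ i, w i * log (r i) ≤ ∑ i, w i * r i - ∑ i, w i := by
  rw [← sum_sub_distrib]
  refine sum_le_sum fun i _ => ?_
  rcases (hw i).eq_or_lt with h | h
  · simp [← h]
  · nlinarith [mul_le_mul_of_nonneg_left (log_le_sub_one_of_pos (hr i h)) h.le]

namespace HOI

section Distribution

variable {Ω α α' β : Type} [Fintype Ω] {p : Ω → ℝ}

lemma pdist_nonneg (hp : ∀ ω, 0 ≤ p ω) (S : Ω → α) (a : α) : 0 ≤ pdist p S a :=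
  sum_nonneg fun ω _ => by split_ifs <;> simp [hp ω]

lemma le_pdist_self (hp : ∀ ω, 0 ≤ p ω) (S : Ω → α) (ω : Ω) : p ω ≤ pdist p S (S ω) := by
  have := single_le_sum (f := fun ω' => if S ω' = S ω then p ω' else 0)
    (fun ω' _ => by split_ifs <;> simp [hp ω']) (mem_univ ω)
  simpa [pdist] using this

lemma pdist_self_pos (hp : ∀ ω, 0 ≤ p ω) (S : Ω → α) {ω : Ω} (h : 0 < p ω) :
    0 < pdist p S (S ω) :=
  h.trans_le (le_pdist_self hp S ω)

lemma sum_pdist_mul [Fintype α] (p : Ω → ℝ) (S : Ω → α) (G : α → ℝ) :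
    ∑ a, pdist p S a * G a = ∑ ω, p ω * G (S ω) := by
  simp only [pdist, sum_mul, ite_mul, zero_mul]
  rw [sum_comm]
  simp

lemma sum_pdist [Fintype α] (p : Ω → ℝ) (S : Ω → α) : ∑ a, pdist p S a = ∑ ω, p ω := by
  simpa using sum_pdist_mul p S fun _ => 1

lemma sum_pdist_pair [Fintype α] (p : Ω → ℝ) (U : Ω → α) (Y : Ω → β) (c : β) :
    ∑ a, pdist p (fun ω => (U ω, Y ω)) (a, c) = pdist p Y c := by
  simp only [pdist]
  rw [sum_comm]
  refine sum_congr rfl fun ω _ => ?_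
  simp [Prod.mk.injEq, ite_and]

lemma sum_pdist_mul_pdist_div {A B C : Type} [Fintype A] [Fintype B] [Fintype C]
    (p : Ω → ℝ) (U : Ω → A) (W : Ω → B) (Y : Ω → C) :
    ∑ x : (A × B) × C, pdist p (fun ω => (U ω, Y ω)) (x.1.1, x.2)
      * pdist p (fun ω => (W ω, Y ω)) (x.1.2, x.2) / pdist p Y x.2 = ∑ ω, p ω := by
  calc _ = ∑ c, (∑ a, pdist p (fun ω => (U ω, Y ω)) (a, c))
          * (∑ b, pdist p (fun ω => (W ω, Y ω)) (b, c)) / pdist p Y c := by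
        simp only [Fintype.sum_prod_type, sum_mul_sum, sum_div]
        rw [eq_comm, sum_comm]
        exact sum_congr rfl fun a _ => sum_comm
    -- `x * x / x = x` holds also at `x = 0`, so null values of `Y` need no case split
    _ = ∑ ω, p ω := by simp only [sum_pdist_pair, mul_self_div_self, sum_pdist]

lemma pdist_comp_equiv (e : α ≃ α') (S : Ω → α) (a : α) :
    pdist p (fun ω => e (S ω)) (e a) = pdist p S a := by
  simp [pdist]

end Distribution

section Entropy

variable {Ω α α' β : Type} [Fintype Ω] [Fintype α] [Fintype α'] [Fintype β] {p : Ω → ℝ}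

lemma ent_eq_sum_mul_neg_log (p : Ω → ℝ) (S : Ω → α) :
    ent p S = ∑ ω, p ω * -log (pdist p S (S ω)) := by
  rw [ent, ← sum_pdist_mul p S fun a => -log (pdist p S a)]
  simp only [negMulLog, neg_mul, mul_neg]

lemma ent_comp_equiv (e : α ≃ α') (S : Ω → α) : ent p (fun ω => e (S ω)) = ent p S := by
  simp only [ent_eq_sum_mul_neg_log, pdist_comp_equiv]

lemma cent_comp_equiv (e : α ≃ α') (S : Ω → α) (Y : Ω → β) :
    cent p (fun ω => e (S ω)) Y = cent p S Y := by
  rw [cent, cent, ← ent_comp_equiv (e.prodCongr (Equiv.refl β)) fun ω => (S ω, Y ω)]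
  rfl

lemma cent_pair_le {A B C : Type} [Fintype A] [Fintype B] [Fintype C] (hp : ∀ ω, 0 ≤ p ω)
    (U : Ω → A) (W : Ω → B) (Y : Ω → C) :
    cent p (fun ω => (U ω, W ω)) Y ≤ cent p U Y + cent p W Y := by
  let UY := fun ω => (U ω, Y ω)
  let WY := fun ω => (W ω, Y ω)
  let UWY := fun ω => ((U ω, W ω), Y ω)
  let N : (A × B) × C → ℝ := fun x => pdist p UY (x.1.1, x.2) * pdist p WY (x.1.2, x.2)
  let G : (A × B) × C → ℝ := fun x => N x / (pdist p UWY x * pdist p Y x.2)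
  have hG_pos : ∀ ω, 0 < p ω → 0 < G (UWY ω) := fun ω h => by
    have := pdist_self_pos hp UY h; have := pdist_self_pos hp WY h
    have := pdist_self_pos hp UWY h; have := pdist_self_pos hp Y h
    positivity
  have hlog : ∀ ω, p ω * log (G (UWY ω)) = p ω * -log (pdist p UWY (UWY ω))
      + p ω * -log (pdist p Y (Y ω)) - p ω * -log (pdist p UY (UY ω))
      - p ω * -log (pdist p WY (WY ω)) := fun ω => by
    rcases (hp ω).eq_or_lt with h | h
    · simp [← h]
    · have := pdist_self_pos hp UY h; have := pdist_self_pos hp WY h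
      have := pdist_self_pos hp UWY h; have := pdist_self_pos hp Y h
      show p ω * log (pdist p UY (UY ω) * pdist p WY (WY ω)
        / (pdist p UWY (UWY ω) * pdist p Y (Y ω))) = _
      rw [log_div (by positivity) (by positivity), log_mul (by positivity) (by positivity),
        log_mul (by positivity) (by positivity)]
      ring
  have hG_mean : ∑ ω, p ω * G (UWY ω) ≤ ∑ ω, p ω := by
    rw [← sum_pdist_mul p UWY G, ← sum_pdist_mul_pdist_div p U W Y]
    refine sum_le_sum fun x _ => ?_
    have hN : 0 ≤ N x / pdist p Y x.2 := by
      have := pdist_nonneg hp UY (x.1.1, x.2); have := pdist_nonneg hp WY (x.1.2, x.2)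
      have := pdist_nonneg hp Y x.2
      positivity
    rcases (pdist_nonneg hp UWY x).eq_or_lt with h | h
    · simpa [G, ← h] using hN
    · rw [← mul_div_assoc, mul_div_mul_left _ _ h.ne']
  have gibbs := sum_mul_log_le_sum_mul_sub hp hG_pos
  simp only [hlog, sum_add_distrib, sum_sub_distrib, ← ent_eq_sum_mul_neg_log] at gibbs
  rw [cent, cent, cent]
  linarith

end Entropy

section Vector

variable {Ω β : Type} [Fintype Ω] [Fintype β] {p : Ω → ℝ}

lemma cent_fullvec_le_sum (hp : ∀ ω, 0 ≤ p ω) (Y : Ω → β) :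
    ∀ {n : ℕ} {α : Fin n → Type} [∀ i, Fintype (α i)] (X : ∀ i, Ω → α i),
      cent p (fullvec X) Y ≤ ∑ j, cent p (X j) Y
  | 0, α, _, X => by
    have hpair : (fun ω => (fullvec X ω, Y ω))
        = fun ω => (Equiv.uniqueProd β (∀ i, α i)).symm (Y ω) :=
      funext fun ω => Prod.ext (Subsingleton.elim _ _) rfl
    rw [cent, hpair, ent_comp_equiv]
    simp
  | n + 1, α, _, X => by
    have hcons : fullvec X = fun ω => Fin.consEquiv α (X 0 ω, fullvec (fun i => X i.succ) ω) := by
      funext ω i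
      cases i using Fin.cases <;> simp [fullvec]
    rw [hcons, cent_comp_equiv, Fin.sum_univ_succ]
    have hpair := cent_pair_le hp (X 0) (fullvec fun i => X i.succ) Y
    have htail := cent_fullvec_le_sum hp Y (α := fun i => α i.succ) fun i => X i.succ
    linarith

lemma ent_fullvec_of_indep {n : ℕ} {α : Fin n → Type} [∀ i, Fintype (α i)]
    (hp : ∀ ω, 0 ≤ p ω) (X : ∀ i, Ω → α i)
    (hind : ∀ x : ∀ i, α i, pdist p (fullvec X) x = ∏ j, pdist p (X j) (x j)) :
    ent p (fullvec X) = ∑ j, ent p (X j) := by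
  simp only [ent_eq_sum_mul_neg_log]
  rw [sum_comm]
  refine sum_congr rfl fun ω _ => ?_
  rcases (hp ω).eq_or_lt with h | h
  · simp [← h]
  · rw [hind]
    change p ω * -log (∏ j, pdist p (X j) (X j ω)) = _
    rw [log_prod fun j _ => (pdist_self_pos hp (X j) h).ne', ← mul_sum,
      sum_neg_distrib]

end Vector

end HOI

theorem rsi_head_to_head_general {Ω β : Type} [Fintype Ω] [Fintype β] {n : ℕ}
    {α : Fin n → Type} [∀ i, Fintype (α i)]
    (p : Ω → ℝ) (hp : ∀ ω, 0 ≤ p ω)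
    (X : ∀ i, Ω → α i) (Y : Ω → β)
    (hind : ∀ x : ∀ i, α i, pdist p (fullvec X) x = ∏ j, pdist p (X j) (x j)) :
    RSI p X Y = -((∑ j, cent p (X j) Y) - cent p (fullvec X) Y)
    ∧ RSI p X Y ≤ 0 := by
  have hRSI : RSI p X Y = -((∑ j, cent p (X j) Y) - cent p (fullvec X) Y) := by
    have hent := ent_fullvec_of_indep hp X hind
    simp only [RSI, mi, cent, sum_add_distrib, sum_sub_distrib]
    linarith
  exact ⟨hRSI, by linarith [cent_fullvec_le_sum hp Y X]⟩

/-- for head-to-head models, RSI = -TC(X|Y) ≤ 0. -/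
theorem rsi_head_to_head {Ω β : Type} [Fintype Ω] [Fintype β] {n : ℕ}
    {α : Fin n → Type} [∀ i, Fintype (α i)] (hn : 1 ≤ n)
    (p : Ω → ℝ) (hp : ∀ ω, 0 ≤ p ω) (hp1 : ∑ ω, p ω = 1)
    (X : ∀ i, Ω → α i) (Y : Ω → β)
    (hind : ∀ x : ∀ i, α i, pdist p (fullvec X) x = ∏ j, pdist p (X j) (x j)) :
    RSI p X Y = -((∑ j, cent p (X j) Y) - cent p (fullvec X) Y)
    ∧ RSI p X Y ≤ 0 :=
  rsi_head_to_head_general p hp X Y hind
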